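/- arXiv:2307.11065 — 6 statements merged into one kernel-verified Lean document; each statement's English description precedes it below -/
import Mathlib

section
/- Under the no-depleting-harvest assumption (all optimal total orders are strictly less than Q), the maximum over q ∈ Q^S of Σ_{i∈S} Λ_i^S(q) equals Σ_{i∈S} max_{0 ≤ q_i ≤ Q} {(p_i(q_i) - t_i(q_i) - (C/Q - b̄))·q_i} - b̄·Q, i.e., the joint maximization decouples into separate one-dimensional maximizations. -/
/-- under no-depleting-harvest, the joint maximization with the
farmer decouples into separate one-dimensional maximizations. -/
theorem mdf_lambda_max_decouples (S : Finset ℕ) (hS : S.Nonempty) (p t : ℕ → ℝ → ℝ)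
    (bbar C Q : ℝ) (hb : 0 < bbar) (hQ : 0 < Q)
    (hp : ∀ i, Continuous (p i)) (ht : ∀ i, Continuous (t i))
    (qopt x : ℕ → ℝ)
    (hfeas : (∀ i ∈ S, 0 ≤ qopt i) ∧ ∑ i ∈ S, qopt i ≤ Q)
    (hmax : ∀ q : ℕ → ℝ, (∀ i ∈ S, 0 ≤ q i) → ∑ i ∈ S, q i ≤ Q →
      ∑ i ∈ S, (p i (q i) - t i (q i) - C / Q -
          bbar * (Q - ∑ j ∈ S, q j) / (∑ j ∈ S, q j)) * q i ≤
      ∑ i ∈ S, (p i (qopt i) - t i (qopt i) - C / Q -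
          bbar * (Q - ∑ j ∈ S, qopt j) / (∑ j ∈ S, qopt j)) * qopt i)
    (hNDH : 0 < ∑ i ∈ S, qopt i ∧ ∑ i ∈ S, qopt i < Q)
    (hx : ∀ i ∈ S, 0 ≤ x i ∧ x i ≤ Q ∧
      ∀ y : ℝ, 0 ≤ y → y ≤ Q →
        (p i y - t i y - (C / Q - bbar)) * y ≤
          (p i (x i) - t i (x i) - (C / Q - bbar)) * x i)
    (hxNDH : 0 < ∑ i ∈ S, x i ∧ ∑ i ∈ S, x i < Q) :
    ∑ i ∈ S, (p i (qopt i) - t i (qopt i) - C / Q -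
        bbar * (Q - ∑ j ∈ S, qopt j) / (∑ j ∈ S, qopt j)) * qopt i
      = (∑ i ∈ S, (p i (x i) - t i (x i) - (C / Q - bbar)) * x i) - bbar * Q := by
  have key : ∀ q : ℕ → ℝ, (∑ j ∈ S, q j) ≠ 0 →
      ∑ i ∈ S, (p i (q i) - t i (q i) - C / Q -
          bbar * (Q - ∑ j ∈ S, q j) / (∑ j ∈ S, q j)) * q i
      = (∑ i ∈ S, (p i (q i) - t i (q i) - (C / Q - bbar)) * q i) - bbar * Q := by
    intro q hs
    set s := ∑ j ∈ S, q j with hsdef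
    have h1 : ∀ i ∈ S, (p i (q i) - t i (q i) - C / Q - bbar * (Q - s) / s) * q i
        = (p i (q i) - t i (q i) - (C / Q - bbar)) * q i
          - (bbar * (Q - s) / s + bbar) * q i := by
      intro i _; ring
    rw [Finset.sum_congr rfl h1, Finset.sum_sub_distrib, ← Finset.mul_sum, ← hsdef]
    have h2 : (bbar * (Q - s) / s + bbar) * s = bbar * Q := by
      field_simp; ring
    rw [h2]
  -- objective at x ≤ objective at qopt (feasibility of x)
  have hxfeas1 : ∀ i ∈ S, 0 ≤ x i := fun i hi => (hx i hi).1
  have hxle := hmax x hxfeas1 (le_of_lt hxNDH.2)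
  rw [key x (ne_of_gt hxNDH.1)] at hxle
  rw [key qopt (ne_of_gt hNDH.1)] at hxle ⊢
  -- pointwise bound: g_i(qopt i) ≤ g_i(x i)
  have hpt : ∑ i ∈ S, (p i (qopt i) - t i (qopt i) - (C / Q - bbar)) * qopt i
      ≤ ∑ i ∈ S, (p i (x i) - t i (x i) - (C / Q - bbar)) * x i := by
    apply Finset.sum_le_sum
    intro i hi
    have h0 : 0 ≤ qopt i := hfeas.1 i hi
    have hle : qopt i ≤ Q := by
      have := Finset.single_le_sum (f := qopt) (fun j hj => hfeas.1 j hj) hi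
      linarith [hfeas.2]
    exact (hx i hi).2.2 (qopt i) h0 hle
  linarith
end

section
/- Under the sustainable compensation assumption 0 < b̄ ≤ min_{S⊆N} {(b(q_S^S) - C/Q)·q_S^S/(Q - q_S^S)} and no-depleting-harvest (q_S^S < Q), for any distributor i in coalition S evaluated at the optimal order vector q^S for joint ordering without the farmer, Λ_i^S(q^S) ≥ Π_i^S(q^S): cooperating with the farmer at the same order sizes yields at least as much profit as joint ordering alone. -/
/-- under sustainable compensation and no-depleting-harvest,
cooperating with the farmer at the optimal joint-ordering order sizes yields at
least as much profit as joint ordering alone. -/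
theorem mdf_lambda_ge_pi (S : Finset ℕ) (i : ℕ) (hi : i ∈ S)
    (p t : ℕ → ℝ → ℝ) (b : ℝ → ℝ) (q : ℕ → ℝ)
    (bbar C Q : ℝ) (hb : 0 < bbar) (hQ : 0 < Q)
    (hq : ∀ k ∈ S, 0 ≤ q k)
    (hpos : 0 < ∑ k ∈ S, q k) (hlt : ∑ k ∈ S, q k < Q)
    (hmax : ∀ q' : ℕ → ℝ, (∀ k ∈ S, 0 ≤ q' k) → ∑ k ∈ S, q' k ≤ Q →
      ∑ k ∈ S, (p k (q' k) - t k (q' k) - b (∑ j ∈ S, q' j)) * q' k ≤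
      ∑ k ∈ S, (p k (q k) - t k (q k) - b (∑ j ∈ S, q j)) * q k)
    (hSC : bbar ≤ (b (∑ k ∈ S, q k) - C / Q) * (∑ k ∈ S, q k) / (Q - ∑ k ∈ S, q k)) :
    (p i (q i) - t i (q i) - b (∑ k ∈ S, q k)) * q i ≤
    (p i (q i) - t i (q i) - C / Q -
        bbar * (Q - ∑ k ∈ S, q k) / (∑ k ∈ S, q k)) * q i := by
  set s := ∑ k ∈ S, q k with hs
  have hgap : 0 < Q - s := by linarith
  have h1 : bbar * (Q - s) ≤ (b s - C / Q) * s := (le_div_iff₀ hgap).mp hSC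
  have h2 : bbar * (Q - s) / s ≤ b s - C / Q := (div_le_iff₀ hpos).mpr h1
  have hqi : 0 ≤ q i := hq i hi
  have hcoef : p i (q i) - t i (q i) - b s ≤
      p i (q i) - t i (q i) - C / Q - bbar * (Q - s) / s := by linarith
  exact mul_le_mul_of_nonneg_right hcoef hqi
end

section
/- In an MDF-situation with SC and NDH, the MDF-game satisfies 0 < v(S) ≤ v(S_0) for every nonempty coalition of distributors S ⊆ N: any coalition of distributors makes strictly positive profit, and including the farmer never decreases the coalition's value. -/
/-- Feasible order vectors for a coalition. -/
def Feas (Q : ℝ) (S : Finset ℕ) (q : ℕ → ℝ) : Prop :=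
  (∀ i ∈ S, 0 ≤ q i) ∧ ∑ i ∈ S, q i ≤ Q

/-- Joint-ordering profit of a coalition. -/
noncomputable def Pisum (p t : ℕ → ℝ → ℝ) (b : ℝ → ℝ) (S : Finset ℕ) (q : ℕ → ℝ) : ℝ :=
  ∑ i ∈ S, (p i (q i) - t i (q i) - b (∑ j ∈ S, q j)) * q i

/-- Profit of a coalition when cooperating with the farmer. -/
noncomputable def Lamsum (p t : ℕ → ℝ → ℝ) (bbar C Q : ℝ) (S : Finset ℕ) (q : ℕ → ℝ) : ℝ :=
  ∑ i ∈ S, (p i (q i) - t i (q i) - C / Q -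
      bbar * (Q - ∑ j ∈ S, q j) / (∑ j ∈ S, q j)) * q i

/-- any nonempty coalition of distributors makes strictly positive
profit, and including the farmer never decreases the coalition's value. -/
theorem mdf_value_positive_and_farmer_improves (S : Finset ℕ) (hS : S.Nonempty)
    (p t : ℕ → ℝ → ℝ) (b : ℝ → ℝ) (bbar C Q : ℝ)
    (hb : 0 < bbar) (hC : 0 < C) (hQ : 0 < Q)
    (hp : ∀ i, Continuous (p i)) (ht : ∀ i, Continuous (t i)) (hbc : Continuous b)
    (hprofit : ∀ i ∈ S, t i 0 + b 0 < p i 0)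
    (qS qS0 : ℕ → ℝ)
    (hfeasS : Feas Q S qS)
    (hmaxS : ∀ q : ℕ → ℝ, Feas Q S q → Pisum p t b S q ≤ Pisum p t b S qS)
    (hfeasS0 : Feas Q S qS0)
    (hmaxS0 : ∀ q : ℕ → ℝ, Feas Q S q →
      Lamsum p t bbar C Q S q ≤ Lamsum p t bbar C Q S qS0)
    (hNDH : (0 < ∑ i ∈ S, qS i ∧ ∑ i ∈ S, qS i < Q) ∧
      (0 < ∑ i ∈ S, qS0 i ∧ ∑ i ∈ S, qS0 i < Q))
    (hSC : bbar ≤ (b (∑ i ∈ S, qS i) - C / Q) * (∑ i ∈ S, qS i) / (Q - ∑ i ∈ S, qS i)) :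
    0 < Pisum p t b S qS ∧ Pisum p t b S qS ≤ Lamsum p t bbar C Q S qS0 := by
  obtain ⟨i₀, hi₀⟩ := hS
  constructor
  · -- positivity: find a feasible vector with positive profit
    set g : ℝ → ℝ := fun x => p i₀ x - t i₀ x - b x with hg
    have hgc : Continuous g := ((hp i₀).sub (ht i₀)).sub hbc
    have hg0 : 0 < g 0 := by
      have := hprofit i₀ hi₀
      simp only [hg]
      linarith
    have hmem : {x | 0 < g x} ∈ nhds (0 : ℝ) :=
      (isOpen_lt continuous_const hgc).mem_nhds hg0
    rw [Metric.mem_nhds_iff] at hmem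
    obtain ⟨δ, hδ, hball⟩ := hmem
    set ε := min (δ / 2) Q with hε
    have hε0 : 0 < ε := lt_min (by linarith) hQ
    have hεQ : ε ≤ Q := min_le_right _ _
    have hgε : 0 < g ε := by
      apply hball
      simp only [Metric.mem_ball, Real.dist_eq, sub_zero, abs_of_pos hε0]
      have : ε ≤ δ / 2 := min_le_left _ _
      linarith
    set q : ℕ → ℝ := fun j => if j = i₀ then ε else 0 with hq
    have hsum : ∑ j ∈ S, q j = ε := by
      simp [hq, Finset.sum_ite_eq', hi₀]
    have hfeas : Feas Q S q := by
      refine ⟨fun i _ => ?_, by rw [hsum]; exact hεQ⟩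
      simp only [hq]
      split <;> [exact le_of_lt hε0; rfl]
    have hval : Pisum p t b S q = g ε * ε := by
      unfold Pisum
      rw [hsum]
      rw [Finset.sum_eq_single i₀]
      · simp [hq, hg]
      · intro j hjS hj
        simp [hq, hj]
      · intro h
        exact absurd hi₀ h
    have : 0 < Pisum p t b S q := by
      rw [hval]; exact mul_pos hgε hε0
    linarith [hmaxS q hfeas]
  · -- farmer improves
    set σ := ∑ i ∈ S, qS i with hσ
    have hσ0 : 0 < σ := hNDH.1.1
    have hσQ : σ < Q := hNDH.1.2
    have hkey : bbar * (Q - σ) / σ ≤ b σ - C / Q := by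
      rw [div_le_iff₀ hσ0]
      have := (le_div_iff₀ (by linarith : (0:ℝ) < Q - σ)).mp hSC
      linarith
    have h1 : Pisum p t b S qS ≤ Lamsum p t bbar C Q S qS := by
      unfold Pisum Lamsum
      apply Finset.sum_le_sum
      intro i hi
      apply mul_le_mul_of_nonneg_right _ (hfeasS.1 i hi)
      rw [← hσ]
      linarith
    linarith [hmaxS0 qS hfeasS]
end

section
/- The farmer compensation allocation σ, defined by σ_i := Λ_i^N(q^{N_0}) − β_i for i ∈ N and σ_0 := Σ_{i∈N} β_i, where β_i := min over coalitions S ∋ i of (v(S_0) − v(S))/|S|, is the unique solution on MDF-games satisfying: (EF) efficiency Σ_{i∈N_0} φ_i = v(N_0); (DR) for each i ∈ N, φ_i = x_i^a − (v(S_0^i) − v(S^i))/|S^i| for some coalition S^i ∋ i; and (MD) φ_0 ≤ Σ_{i∈N} min_{S∋i} (v(S_0) − v(S))/|S|. -/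
/-- the farmer compensation allocation σ is the unique solution
satisfying efficiency (EF), distributors reduction (DR) and maximal
compensation (MD).  Here the farmer is player 0, `a i = Λᵢᴺ(q^{N₀})` is the
altruistic payoff of distributor `i`, and `β i` is the minimum over coalitions
`S ∋ i` of `(v(S₀) − v(S))/|S|`. -/
theorem mdf_fc_allocation_characterization (N : Finset ℕ) (hN : 0 ∉ N)
    (v : Finset ℕ → ℝ) (a β : ℕ → ℝ)
    (heff : ∑ i ∈ N, a i = v (insert 0 N))
    (hβ : ∀ i ∈ N, IsLeast
      {y : ℝ | ∃ S : Finset ℕ, S ⊆ N ∧ i ∈ S ∧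
        y = (v (insert 0 S) - v S) / (S.card : ℝ)} (β i))
    (φ : ℕ → ℝ) :
    ((∑ i ∈ insert 0 N, φ i = v (insert 0 N)) ∧
     (∀ i ∈ N, ∃ S : Finset ℕ, S ⊆ N ∧ i ∈ S ∧
        φ i = a i - (v (insert 0 S) - v S) / (S.card : ℝ)) ∧
     (φ 0 ≤ ∑ i ∈ N, β i))
    ↔ (φ 0 = ∑ i ∈ N, β i ∧ ∀ i ∈ N, φ i = a i - β i) := by
  constructor
  · rintro ⟨hEF, hDR, hMD⟩
    rw [Finset.sum_insert hN] at hEF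
    -- for each i, β i ≤ a i - φ i
    have hle : ∀ i ∈ N, β i ≤ a i - φ i := by
      intro i hi
      obtain ⟨S, hS, hiS, hφ⟩ := hDR i hi
      have := (hβ i hi).2 ⟨S, hS, hiS, rfl⟩
      linarith
    have hsum : φ 0 = ∑ i ∈ N, (a i - φ i) := by
      rw [Finset.sum_sub_distrib, heff]; linarith
    have hge : ∑ i ∈ N, β i ≤ φ 0 := by
      rw [hsum]; exact Finset.sum_le_sum hle
    have heq0 : φ 0 = ∑ i ∈ N, β i := le_antisymm hMD hge
    have hsumeq : ∑ i ∈ N, β i = ∑ i ∈ N, (a i - φ i) := by linarith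
    refine ⟨heq0, fun i hi => ?_⟩
    by_contra h
    have hlt : β i < a i - φ i := lt_of_le_of_ne (hle i hi) (fun he => h (by linarith))
    have : ∑ i ∈ N, β i < ∑ i ∈ N, (a i - φ i) :=
      Finset.sum_lt_sum hle ⟨i, hi, hlt⟩
    linarith
  · rintro ⟨h0, hφ⟩
    refine ⟨?_, fun i hi => ?_, le_of_eq h0⟩
    · rw [Finset.sum_insert hN, h0, Finset.sum_congr rfl hφ,
        Finset.sum_sub_distrib, heff]
      ring
    · obtain ⟨S, hS, hiS, hy⟩ := (hβ i hi).1
      exact ⟨S, hS, hiS, by rw [hφ i hi, hy]⟩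
end

section
/- Abstract core lemma: Let N be a finite set, v a TU-game on N_0 = N ∪ {0}, and (a_i)_{i∈N} reals with Σ_{i∈N} a_i = v(N_0), Σ_{i∈S} a_i ≥ v(S_0) ≥ v(S) ≥ 0 for all nonempty S ⊆ N, and v({0}) = v(∅) = 0. Define β_i := min_{S ⊆ N, i∈S} (v(S_0) − v(S))/|S|. Then the allocation (Σ_{i∈N} β_i; (a_i − β_i)_{i∈N}) is in the core of (N_0, v). -/
/-- abstract core lemma.  Player 0 is the farmer, `N` the set of
distributors, `a` an allocation of `v(N₀)` among distributors dominating every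
farmer-coalition value, and `β i = min_{S ∋ i} (v(S₀) − v(S))/|S|`.  Then the
allocation giving `Σ β` to the farmer and `aᵢ − βᵢ` to distributor `i` is in
the core of `(N₀, v)`. -/
theorem abstract_core_lemma (N : Finset ℕ) (hN : 0 ∉ N)
    (v : Finset ℕ → ℝ) (a β : ℕ → ℝ)
    (hvempty : v ∅ = 0) (hvzero : v {0} = 0)
    (heff : ∑ i ∈ N, a i = v (insert 0 N))
    (hfacts : ∀ S ⊆ N, S.Nonempty →
      v (insert 0 S) ≤ (∑ i ∈ S, a i) ∧ v S ≤ v (insert 0 S) ∧ 0 ≤ v S)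
    (hβ : ∀ i ∈ N, IsLeast
      {y : ℝ | ∃ S : Finset ℕ, S ⊆ N ∧ i ∈ S ∧
        y = (v (insert 0 S) - v S) / (S.card : ℝ)} (β i)) :
    (∑ i ∈ insert 0 N, (if i = 0 then ∑ j ∈ N, β j else a i - β i))
        = v (insert 0 N) ∧
    ∀ T ⊆ insert 0 N,
      v T ≤ ∑ i ∈ T, (if i = 0 then ∑ j ∈ N, β j else a i - β i) := by
  have hβ0 : ∀ i ∈ N, 0 ≤ β i := by
    intro i hi
    obtain ⟨⟨S, hSN, hiS, hEq⟩, _⟩ := hβ i hi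
    obtain ⟨h1, h2, h3⟩ := hfacts S hSN ⟨i, hiS⟩
    rw [hEq]
    exact div_nonneg (by linarith) (Nat.cast_nonneg _)
  constructor
  · rw [Finset.sum_insert hN, if_pos rfl,
      Finset.sum_congr rfl (fun i hi => if_neg (by rintro rfl; exact hN hi)),
      Finset.sum_sub_distrib]
    linarith
  · intro T hT
    by_cases h0 : 0 ∈ T
    · set S := T.erase 0 with hSdef
      have hSN : S ⊆ N := by
        intro x hx
        rcases Finset.mem_insert.mp (hT (Finset.mem_of_mem_erase hx)) with h | h
        · exact absurd h (Finset.ne_of_mem_erase hx)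
        · exact h
      have hTS : T = insert 0 S := (Finset.insert_erase h0).symm
      have hsum : ∑ i ∈ T, (if i = 0 then ∑ j ∈ N, β j else a i - β i)
          = (∑ j ∈ N, β j) + ∑ i ∈ S, (a i - β i) := by
        rw [hTS, Finset.sum_insert (Finset.notMem_erase 0 T), if_pos rfl,
          Finset.sum_congr rfl (fun i hi => if_neg (by rintro rfl; exact hN (hSN hi)))]
      rcases S.eq_empty_or_nonempty with hSe | hSne
      · have hT0 : T = {0} := by rw [hTS, hSe]; rfl
        rw [hsum, hSe, hT0, hvzero, Finset.sum_empty, add_zero]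
        exact Finset.sum_nonneg (fun i hi => hβ0 i hi)
      · obtain ⟨h1, h2, h3⟩ := hfacts S hSN hSne
        have hge : ∑ j ∈ S, β j ≤ ∑ j ∈ N, β j :=
          Finset.sum_le_sum_of_subset_of_nonneg hSN (fun i hi _ => hβ0 i hi)
        rw [hsum, Finset.sum_sub_distrib, hTS]
        linarith
    · have hTN : T ⊆ N := fun x hx =>
        (Finset.mem_insert.mp (hT hx)).resolve_left (fun h => h0 (h ▸ hx))
      rcases T.eq_empty_or_nonempty with hTe | hTne
      · simp [hTe, hvempty]
      · obtain ⟨h1, h2, h3⟩ := hfacts T hTN hTne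
        have hcard : (0:ℝ) < T.card := by exact_mod_cast Finset.card_pos.mpr hTne
        have hβle : ∀ i ∈ T, β i ≤ (v (insert 0 T) - v T) / T.card := fun i hi =>
          (hβ i (hTN hi)).2 ⟨T, hTN, hi, rfl⟩
        have hsumβ : ∑ i ∈ T, β i ≤ v (insert 0 T) - v T := by
          calc ∑ i ∈ T, β i ≤ ∑ i ∈ T, (v (insert 0 T) - v T) / T.card :=
                Finset.sum_le_sum hβle
            _ = T.card * ((v (insert 0 T) - v T) / T.card) := by
                rw [Finset.sum_const, nsmul_eq_mul]
            _ = v (insert 0 T) - v T := by field_simp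
        rw [Finset.sum_congr rfl (fun i hi => if_neg (by rintro rfl; exact h0 hi)),
          Finset.sum_sub_distrib]
        linarith
end

section
/- In an MDF-situation with SC and NDH, the farmer's revenue is maximized by the grand coalition, i.e., max_{S⊆N} {r(S), r(S_0)} = r(N_0), if and only if (1/(Q − q_N^{N_0}))·(max_{S⊆N} {b(q_S^S)·q_S^S} − (C/Q)·q_N^{N_0}) ≤ b̄ ≤ C/Q. -/
/-- the farmer's revenue is maximized by the grand coalition,
i.e. r(S) ≤ r(N₀) and r(S₀) ≤ r(N₀) for all S ⊆ N, if and only if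
(1/(Q − q_N^{N₀}))·(max_S b(q_S^S)q_S^S − (C/Q)q_N^{N₀}) ≤ b̄ ≤ C/Q.
Here `qPi S` is the optimal joint order of coalition `S` (without the farmer)
and `qN0` the (coalition-independent) optimal orders with the farmer. -/
theorem mdf_farmer_revenue_maximized_iff (N : Finset ℕ)
    (p t : ℕ → ℝ → ℝ) (b : ℝ → ℝ) (bbar C Q : ℝ)
    (hb : 0 < bbar) (hC : 0 < C) (hQ : 0 < Q)
    (qPi : Finset ℕ → ℕ → ℝ) (qN0 : ℕ → ℝ)
    (hnn : ∀ i ∈ N, 0 ≤ qN0 i)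
    (hpos : 0 < ∑ i ∈ N, qN0 i)
    (hlt : ∑ i ∈ N, qN0 i < Q)
    (M : ℝ)
    (hM : IsGreatest
      {y : ℝ | ∃ S : Finset ℕ, S ⊆ N ∧
        y = b (∑ i ∈ S, qPi S i) * ∑ i ∈ S, qPi S i} M) :
    (∀ S ⊆ N,
        b (∑ i ∈ S, qPi S i) * (∑ i ∈ S, qPi S i) ≤
          C / Q * (∑ i ∈ N, qN0 i) + bbar * (Q - ∑ i ∈ N, qN0 i) ∧
        C / Q * (∑ i ∈ S, qN0 i) + bbar * (Q - ∑ i ∈ S, qN0 i) ≤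
          C / Q * (∑ i ∈ N, qN0 i) + bbar * (Q - ∑ i ∈ N, qN0 i))
    ↔ (1 / (Q - ∑ i ∈ N, qN0 i) * (M - C / Q * (∑ i ∈ N, qN0 i)) ≤ bbar ∧
        bbar ≤ C / Q) := by
  set q := ∑ i ∈ N, qN0 i with hq
  have hD : 0 < Q - q := by linarith
  constructor
  · intro h
    have hbC : bbar ≤ C / Q := by
      have h0 := (h ∅ (Finset.empty_subset N)).2
      simp only [Finset.sum_empty] at h0
      have : bbar * q ≤ C / Q * q := by nlinarith
      exact le_of_mul_le_mul_right (by linarith [this]) hpos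
    refine ⟨?_, hbC⟩
    obtain ⟨S, hS, hMeq⟩ := hM.1
    have hle := (h S hS).1
    rw [one_div, inv_mul_le_iff₀ hD]
    nlinarith
  · rintro ⟨h1, h2⟩ S hS
    have hMle : M ≤ C / Q * q + bbar * (Q - q) := by
      rw [one_div, inv_mul_le_iff₀ hD] at h1
      nlinarith
    have hb1 : b (∑ i ∈ S, qPi S i) * (∑ i ∈ S, qPi S i) ≤ M :=
      hM.2 ⟨S, hS, rfl⟩
    have hs : ∑ i ∈ S, qN0 i ≤ q :=
      Finset.sum_le_sum_of_subset_of_nonneg hS (fun i hi _ => hnn i hi)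
    refine ⟨le_trans hb1 hMle, ?_⟩
    nlinarith [mul_nonneg (sub_nonneg.mpr h2) (sub_nonneg.mpr hs)]
end
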